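/- arXiv:2411.15866 — 3 statements merged into one kernel-verified Lean document; each statement's English description precedes it below -/
import Mathlib

section
/- For any nonzero vector g in R^d and a vector e uniformly distributed on the unit Euclidean sphere S^{d-1}, the expectation E_e[sign(⟨g, e⟩) e] is a positive scalar multiple of g/‖g‖; in particular it is parallel to g. -/
open MeasureTheory
open scoped RealInnerProductSpace

/-! The integral `I = ∫ sign ⟪g, e⟫ • e ∂μ` is fixed by every isometry fixing `g`, since such an
isometry preserves both `μ` and the integrand. Reflecting in the hyperplane orthogonal to any
`w ⊥ g` then gives `⟪w, I⟫ = -⟪w, I⟫`, so `I` is a multiple of `g`. The multiple is positive because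
`⟪g, I⟫ = ∫ |⟪g, e⟫| ∂μ`, which could only vanish if `μ` were carried by the hyperplane `gᗮ`; by
rotation invariance it would then be carried by every hyperplane, hence by `{0}`, which misses the
sphere. -/

namespace Real

theorem measurable_sign : Measurable Real.sign :=
  Measurable.ite measurableSet_Iio measurable_const
    (Measurable.ite measurableSet_Ioi measurable_const measurable_const)

theorem abs_sign_le_one (r : ℝ) : |Real.sign r| ≤ 1 := by
  rcases Real.sign_apply_eq r with h | h | h <;> simp [h]

theorem sign_mul_self_eq_abs (r : ℝ) : Real.sign r * r = |r| := by
  rcases lt_trichotomy r 0 with h | rfl | h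
  · rw [Real.sign_of_neg h, abs_of_neg h, neg_one_mul]
  · simp
  · rw [Real.sign_of_pos h, abs_of_pos h, one_mul]

end Real

section Subspace

variable {E : Type*} [NormedAddCommGroup E] [InnerProductSpace ℝ E]

theorem mem_span_singleton_of_forall_linearIsometryEquiv_fix {g x : E}
    (hx : ∀ O : E ≃ₗᵢ[ℝ] E, O g = g → O x = x) : x ∈ ℝ ∙ g := by
  rw [← Submodule.orthogonal_orthogonal (ℝ ∙ g), Submodule.mem_orthogonal]
  intro w hw
  have hwg : ⟪w, g⟫ = 0 := Submodule.mem_orthogonal_singleton_iff_inner_left.1 hw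
  set R := (ℝ ∙ w)ᗮ.reflection
  have hRg : R g = g := Submodule.reflection_mem_subspace_eq_self
    (Submodule.mem_orthogonal_singleton_iff_inner_right.2 hwg)
  have hRw : R w = -w := Submodule.reflection_orthogonalComplement_singleton_eq_neg w
  have : ⟪w, x⟫ = -⟪w, x⟫ := calc
    ⟪w, x⟫ = ⟪R w, R x⟫ := (R.inner_map_map w x).symm
    _ = -⟪w, x⟫ := by rw [hx R hRg, hRw, inner_neg_left]
  linarith

theorem exists_pos_smul_eq_of_mem_span_singleton_of_inner_pos {g x : E} (hx : x ∈ ℝ ∙ g)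
    (hgx : 0 < ⟪g, x⟫) : ∃ a : ℝ, 0 < a ∧ x = a • g := by
  obtain ⟨a, rfl⟩ := Submodule.mem_span_singleton.1 hx
  rw [real_inner_smul_right, real_inner_self_eq_norm_sq] at hgx
  exact ⟨a, pos_of_mul_pos_left hgx (sq_nonneg _), rfl⟩

end Subspace

section Invariant

variable {E : Type*} [NormedAddCommGroup E] [InnerProductSpace ℝ E]
  [MeasurableSpace E] [BorelSpace E] {μ : Measure E}

theorem LinearIsometryEquiv.measurePreserving_of_map_eq (O : E ≃ₗᵢ[ℝ] E) (hO : μ.map O = μ) :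
    MeasurePreserving O μ μ :=
  ⟨O.continuous.measurable, hO⟩

theorem integral_comp_linearIsometryEquiv_of_map_eq {F : Type*} [NormedAddCommGroup F]
    [NormedSpace ℝ F] (O : E ≃ₗᵢ[ℝ] E) (hO : μ.map O = μ) (f : E → F) :
    ∫ e, f (O e) ∂μ = ∫ e, f e ∂μ :=
  (O.measurePreserving_of_map_eq hO).integral_comp O.toHomeomorph.measurableEmbedding f

theorem linearIsometryEquiv_integral_sign_inner_smul [CompleteSpace E] {g : E} (O : E ≃ₗᵢ[ℝ] E)
    (hO : μ.map O = μ) (hOg : O g = g) :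
    O (∫ e, Real.sign ⟪g, e⟫ • e ∂μ) = ∫ e, Real.sign ⟪g, e⟫ • e ∂μ := by
  have hinner : ∀ e, ⟪g, O e⟫ = ⟪g, e⟫ := fun e ↦ by rw [← O.inner_map_map g e, hOg]
  calc O (∫ e, Real.sign ⟪g, e⟫ • e ∂μ)
      = ∫ e, O.toLinearIsometry (Real.sign ⟪g, e⟫ • e) ∂μ :=
        (O.toLinearIsometry.integral_comp_comm _).symm
    _ = ∫ e, Real.sign ⟪g, O e⟫ • O e ∂μ := by simp [hinner]
    _ = ∫ e, Real.sign ⟪g, e⟫ • e ∂μ :=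
        integral_comp_linearIsometryEquiv_of_map_eq O hO fun e ↦ Real.sign ⟪g, e⟫ • e

theorem integral_sign_inner_smul_mem_span_singleton [CompleteSpace E] {g : E}
    (hμ : ∀ O : E ≃ₗᵢ[ℝ] E, μ.map O = μ) : ∫ e, Real.sign ⟪g, e⟫ • e ∂μ ∈ ℝ ∙ g :=
  mem_span_singleton_of_forall_linearIsometryEquiv_fix fun O hOg ↦
    linearIsometryEquiv_integral_sign_inner_smul O (hμ O) hOg

theorem ae_inner_eq_zero_of_norm_eq {g w : E} (hμ : ∀ O : E ≃ₗᵢ[ℝ] E, μ.map O = μ)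
    (hw : ‖g‖ = ‖w‖) (hg : ∀ᵐ e ∂μ, ⟪g, e⟫ = 0) : ∀ᵐ e ∂μ, ⟪w, e⟫ = 0 := by
  set O := (ℝ ∙ (g - w))ᗮ.reflection
  have hOg : O g = w := Submodule.reflection_sub hw
  have hpres := (O.symm.measurePreserving_of_map_eq (hμ O.symm)).quasiMeasurePreserving
  filter_upwards [hpres.ae hg] with e he
  rwa [← O.inner_map_eq_flip, hOg] at he

theorem ae_eq_zero_of_ae_inner_eq_zero [FiniteDimensional ℝ E] {g : E}
    (hμ : ∀ O : E ≃ₗᵢ[ℝ] E, μ.map O = μ) (hg₀ : g ≠ 0) (hg : ∀ᵐ e ∂μ, ⟪g, e⟫ = 0) :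
    ∀ᵐ e ∂μ, e = 0 := by
  let b := stdOrthonormalBasis ℝ E
  have hnorm : ∀ i, ‖g‖ = ‖‖g‖ • b i‖ := fun i ↦ by simp [norm_smul, b.orthonormal.1 i]
  have hbasis : ∀ᵐ e ∂μ, ∀ i, ⟪‖g‖ • b i, e⟫ = 0 :=
    ae_all_iff.2 fun i ↦ ae_inner_eq_zero_of_norm_eq hμ (hnorm i) hg
  filter_upwards [hbasis] with e he
  rw [← b.sum_repr' e]
  refine Finset.sum_eq_zero fun i _ ↦ ?_
  have := he i
  rw [real_inner_smul_left, mul_eq_zero] at this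
  simp [this.resolve_left (norm_ne_zero_iff.2 hg₀)]

end Invariant

section SignIntegral

variable {E : Type*} [NormedAddCommGroup E] [InnerProductSpace ℝ E] [MeasurableSpace E]
  {μ : Measure E}

theorem MeasureTheory.Integrable.sign_inner_smul (hμ : Integrable id μ) (g : E) :
    Integrable (fun e ↦ Real.sign ⟪g, e⟫ • e) μ := by
  refine hμ.mono ?_ (Filter.Eventually.of_forall fun e ↦ ?_)
  · have hsign : AEMeasurable (fun e ↦ Real.sign ⟪g, e⟫) μ :=
      Real.measurable_sign.comp_aemeasurable (hμ.1.const_inner (c := g) (𝕜 := ℝ)).aemeasurable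
    exact hsign.aestronglyMeasurable.smul hμ.1
  · rw [norm_smul, Real.norm_eq_abs]
    exact mul_le_of_le_one_left (norm_nonneg _) (Real.abs_sign_le_one _)

theorem inner_integral_sign_inner_smul [CompleteSpace E] (hμ : Integrable id μ) (g : E) :
    ⟪g, ∫ e, Real.sign ⟪g, e⟫ • e ∂μ⟫ = ∫ e, |⟪g, e⟫| ∂μ := by
  rw [← integral_inner (hμ.sign_inner_smul g)]
  simp only [real_inner_smul_right, Real.sign_mul_self_eq_abs]

theorem integral_abs_inner_pos (hμ : Integrable id μ) {g : E}
    (hg : ¬ ∀ᵐ e ∂μ, ⟪g, e⟫ = 0) : 0 < ∫ e, |⟪g, e⟫| ∂μ := by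
  have hint : Integrable (fun e ↦ |⟪g, e⟫|) μ := (hμ.const_inner g).abs
  refine lt_of_le_of_ne (integral_nonneg fun e ↦ abs_nonneg _) fun h ↦ hg ?_
  filter_upwards [(integral_eq_zero_iff_of_nonneg (fun e ↦ abs_nonneg _) hint).1 h.symm]
    with e he
  exact abs_eq_zero.1 he

end SignIntegral

theorem integrable_id_of_ae_norm_eq_one {E : Type*} [NormedAddCommGroup E] [MeasurableSpace E]
    [OpensMeasurableSpace E] [SecondCountableTopology E] {μ : Measure E} [IsFiniteMeasure μ]
    (hμ : ∀ᵐ e ∂μ, ‖e‖ = 1) :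
    Integrable id μ :=
  Integrable.of_bound measurable_id.aestronglyMeasurable 1 (hμ.mono fun _ he ↦ he.le)

theorem stmt0_general (d : ℕ) (g : EuclideanSpace ℝ (Fin d)) (hg : g ≠ 0)
    (μ : Measure (EuclideanSpace ℝ (Fin d))) [IsProbabilityMeasure μ]
    (hsphere : μ {e | ‖e‖ ≠ 1} = 0)
    (hinv : ∀ O : EuclideanSpace ℝ (Fin d) ≃ₗᵢ[ℝ] EuclideanSpace ℝ (Fin d),
      Measure.map (⇑O) μ = μ) :
    ∃ c : ℝ, 0 < c ∧
      (∫ e, Real.sign ⟪g, e⟫ • e ∂μ) = c • (‖g‖⁻¹ • g) := by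
  have hsphere' : ∀ᵐ e ∂μ, ‖e‖ = 1 := ae_iff.2 hsphere
  have hint := integrable_id_of_ae_norm_eq_one hsphere'
  have hnot_flat : ¬ ∀ᵐ e ∂μ, ⟪g, e⟫ = 0 := fun h ↦ by
    have hfalse : ∀ᵐ _ ∂μ, False := by
      filter_upwards [ae_eq_zero_of_ae_inner_eq_zero hinv hg h, hsphere'] with e h0 h1
      simp [h0] at h1
    exact IsProbabilityMeasure.ne_zero μ (by simpa using hfalse)
  obtain ⟨a, ha, hI⟩ := exists_pos_smul_eq_of_mem_span_singleton_of_inner_pos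
    (integral_sign_inner_smul_mem_span_singleton hinv)
    (inner_integral_sign_inner_smul hint g ▸ integral_abs_inner_pos hint hnot_flat)
  have hgn : 0 < ‖g‖ := norm_pos_iff.2 hg
  refine ⟨a * ‖g‖, mul_pos ha hgn, ?_⟩
  rw [hI, smul_smul, mul_assoc, mul_inv_cancel₀ hgn.ne', mul_one]

/-- For any nonzero vector `g` in `ℝ^d` and `e` uniformly distributed on the unit
Euclidean sphere (a rotation-invariant probability measure supported on the sphere),
the expectation `E[sign ⟪g, e⟫ • e]` is a positive scalar multiple of `g / ‖g‖`. -/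
theorem stmt0 (d : ℕ) (hd : 1 ≤ d) (g : EuclideanSpace ℝ (Fin d)) (hg : g ≠ 0)
    (μ : Measure (EuclideanSpace ℝ (Fin d))) [IsProbabilityMeasure μ]
    (hsphere : μ {e | ‖e‖ ≠ 1} = 0)
    (hinv : ∀ O : EuclideanSpace ℝ (Fin d) ≃ₗᵢ[ℝ] EuclideanSpace ℝ (Fin d),
      Measure.map (⇑O) μ = μ) :
    ∃ c : ℝ, 0 < c ∧
      (∫ e, Real.sign ⟪g, e⟫ • e ∂μ) = c • (‖g‖⁻¹ • g) :=
  stmt0_general d g hg μ hsphere hinv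
end

section
/- Let H be a real symmetric positive definite d×d matrix with all eigenvalues at least μ > 0, let d ≥ 2, 0 < c ≤ 1, α > 0. Define V_other = (d²/((d−1)² c² α² μ²)) · ((2/μ) H − I)^{-1} and V_our = (d/((d−1)² α²)) · H^{-2}. Then V_other − V_our is positive semi-definite. -/
/-!
Both matrices are functions of `H` in the sense of the functional calculus, so comparing them
reduces to comparing scalar functions on the spectrum of `H`. For an eigenvalue `t ≥ μ` one has
`μ (2t - μ) ≤ t²`, i.e. `μ² H⁻² ⪯ ((2/μ) H - I)⁻¹`. Writing `V_other = a A` and `V_our = b B`,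
`a A - b B = a (A - μ² B) + (a μ² - b) B`, and `a μ² ≥ b` amounts to `c² d ≤ d²`.
-/

open scoped MatrixOrder

lemma sq_mul_inv_mul_inv_le_inv_two_div_mul_sub_one {μ t : ℝ} (hμ : 0 < μ) (ht : μ / 2 < t) :
    μ ^ 2 * (t⁻¹ * t⁻¹) ≤ (2 / μ * t - 1)⁻¹ := by
  have ht0 : 0 < t := by linarith
  have hden : 0 < 2 * t - μ := by linarith
  have hrhs : (2 / μ * t - 1)⁻¹ = μ / (2 * t - μ) := by
    field_simp
  rw [hrhs, ← div_eq_mul_inv, ← one_div, div_div, le_div_iff₀ hden]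
  field_simp
  nlinarith [sq_nonneg (t - μ)]

namespace Matrix

variable {n 𝕜 : Type*} [Fintype n] [DecidableEq n] [RCLike 𝕜]

lemma continuousOn_spectrum_real (f : ℝ → ℝ) (A : Matrix n n 𝕜) :
    ContinuousOn f (spectrum ℝ A) :=
  (Set.toFinite _).continuousOn f

lemma IsHermitian.sq_smul_inv_mul_inv_le {H : Matrix n n 𝕜} (hH : H.IsHermitian) {μ : ℝ}
    (hμ : 0 < μ) (hspec : ∀ x ∈ spectrum ℝ H, μ / 2 < x) :
    μ ^ 2 • (H⁻¹ * H⁻¹) ≤ ((2 / μ) • H - 1)⁻¹ := by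
  have hcont (f : ℝ → ℝ) := continuousOn_spectrum_real f H
  have hH' : IsSelfAdjoint H := hH
  have hinv : H⁻¹ = cfc (·⁻¹ : ℝ → ℝ) H := by
    rw [cfc_inv (fun x : ℝ => x) H (fun x hx => (by linarith [hspec x hx] : (0 : ℝ) < x).ne')
      (hcont _) hH', cfc_id' ℝ H hH', nonsing_inv_eq_ringInverse]
  have hlhs : μ ^ 2 • (H⁻¹ * H⁻¹) = cfc (fun x : ℝ => μ ^ 2 * (x⁻¹ * x⁻¹)) H := by
    rw [cfc_const_mul _ _ H (hcont _), cfc_mul _ _ H (hcont _) (hcont _), hinv]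
  have hrhs : ((2 / μ) • H - 1)⁻¹ = cfc (fun x : ℝ => (2 / μ * x - 1)⁻¹) H := by
    have hne : ∀ x ∈ spectrum ℝ H, 2 / μ * x - 1 ≠ 0 := fun x hx => by
      have : 1 < 2 / μ * x := by
        rw [div_mul_eq_mul_div, one_lt_div hμ]
        linarith [hspec x hx]
      exact (sub_pos.mpr this).ne'
    rw [cfc_inv (fun x : ℝ => 2 / μ * x - 1) H hne (hcont _) hH', ← nonsing_inv_eq_ringInverse,
      cfc_sub _ _ H (hcont _) (hcont _), cfc_const_mul_id _ H hH', cfc_const_one ℝ H]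
  rw [hlhs, hrhs]
  exact cfc_mono (fun x hx => sq_mul_inv_mul_inv_le_inv_two_div_mul_sub_one hμ (hspec x hx))
    (hcont _) (hcont _)

end Matrix

theorem stmt8_general (d : ℕ) (μ c α : ℝ) (hμ : 0 < μ)
    (hc : 0 < c) (hc1 : c ≤ 1)
    (H : Matrix (Fin d) (Fin d) ℝ) (hH : H.PosDef)
    (heig : ∀ i, μ ≤ hH.1.eigenvalues i) :
    (((d : ℝ) ^ 2 / (((d : ℝ) - 1) ^ 2 * c ^ 2 * α ^ 2 * μ ^ 2)) •
        ((2 / μ) • H - 1)⁻¹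
      - ((d : ℝ) / (((d : ℝ) - 1) ^ 2 * α ^ 2)) • (H⁻¹ * H⁻¹)).PosSemidef := by
  set a := (d : ℝ) ^ 2 / (((d : ℝ) - 1) ^ 2 * c ^ 2 * α ^ 2 * μ ^ 2) with ha
  set b := (d : ℝ) / (((d : ℝ) - 1) ^ 2 * α ^ 2) with hb
  have hspec : ∀ x ∈ spectrum ℝ H, μ / 2 < x := by
    rw [hH.1.spectrum_real_eq_range_eigenvalues]
    rintro _ ⟨i, rfl⟩
    linarith [heig i]
  have hle : μ ^ 2 • (H⁻¹ * H⁻¹) ≤ ((2 / μ) • H - 1)⁻¹ :=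
    hH.1.sq_smul_inv_mul_inv_le hμ hspec
  have hsq : 0 ≤ H⁻¹ * H⁻¹ := by
    rw [Matrix.nonneg_iff_posSemidef, ← sq]
    exact hH.posSemidef.inv.pow 2
  have hd_le : (d : ℝ) ≤ d ^ 2 / c ^ 2 := by
    rw [le_div_iff₀ (by positivity)]
    calc (d : ℝ) * c ^ 2 ≤ d * 1 := by gcongr; exact pow_le_one₀ hc.le hc1
      _ ≤ d ^ 2 := by rw [mul_one]; exact_mod_cast Nat.le_self_pow two_ne_zero d
  have hba : b ≤ a * μ ^ 2 :=
    calc b ≤ (d ^ 2 / c ^ 2) / (((d : ℝ) - 1) ^ 2 * α ^ 2) := by rw [hb]; gcongr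
      _ = a * μ ^ 2 := by rw [ha]; field_simp
  rw [← Matrix.nonneg_iff_posSemidef]
  calc (0 : Matrix (Fin d) (Fin d) ℝ)
      ≤ a • (((2 / μ) • H - 1)⁻¹ - μ ^ 2 • (H⁻¹ * H⁻¹))
          + (a * μ ^ 2 - b) • (H⁻¹ * H⁻¹) :=
        add_nonneg (smul_nonneg (by positivity) (sub_nonneg.mpr hle))
          (smul_nonneg (sub_nonneg.mpr hba) hsq)
    _ = a • ((2 / μ) • H - 1)⁻¹ - b • (H⁻¹ * H⁻¹) := by module

/-- With `H` real symmetric positive definite with eigenvalues at least `μ > 0`,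
`d ≥ 2`, `0 < c ≤ 1`, `α > 0`,
`V_other = (d²/((d−1)²c²α²μ²)) ((2/μ)H − I)⁻¹` and `V_our = (d/((d−1)²α²)) H⁻²`
satisfy `V_other − V_our ⪰ 0`. -/
theorem stmt8 (d : ℕ) (hd : 2 ≤ d) (μ c α : ℝ) (hμ : 0 < μ)
    (hc : 0 < c) (hc1 : c ≤ 1) (hα : 0 < α)
    (H : Matrix (Fin d) (Fin d) ℝ) (hH : H.PosDef)
    (heig : ∀ i, μ ≤ hH.1.eigenvalues i) :
    (((d : ℝ) ^ 2 / (((d : ℝ) - 1) ^ 2 * c ^ 2 * α ^ 2 * μ ^ 2)) •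
        ((2 / μ) • H - 1)⁻¹
      - ((d : ℝ) / (((d : ℝ) - 1) ^ 2 * α ^ 2)) • (H⁻¹ * H⁻¹)).PosSemidef :=
  stmt8_general d μ c α hμ hc hc1 H hH heig
end

section
/- Let f: R^d → R be twice continuously differentiable with ∇²f(x*) positive definite at a minimizer x*, and let ψ: R^d → R^d be differentiable at 0 with ψ(0) = 0 and ‖ψ'(0)x − ψ(x)‖ ≤ K₂‖x‖^{1+λ} for ‖x‖ < ε, some K₂ > 0, 0 < λ ≤ 1. Suppose also ∇f is L-Lipschitz and ‖∇f(x) − ∇²f(x*)(x − x*)‖ ≤ K₃‖x − x*‖² near x*. Define R(x) = ψ(∇f(x)) and G = ψ'(0)∇²f(x*). Then there exists K > 0 and a neighborhood of x* on which ‖R(x) − G(x − x*)‖ ≤ K‖x − x*‖^{1+λ}. -/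
open scoped RealInnerProductSpace

/-- If `ψ(0) = 0`, `‖ψ'(0)x − ψ(x)‖ ≤ K₂‖x‖^{1+λ}` near `0`, `∇f` is `L`-Lipschitz,
`∇f(x*) = 0`, and `‖∇f(x) − ∇²f(x*)(x − x*)‖ ≤ K₃‖x − x*‖²` near the minimizer `x*`
(with `f` twice continuously differentiable and `∇²f(x*) ≻ 0`), then
`R(x) = ψ(∇f(x))` and `G = ψ'(0)∇²f(x*)` satisfy
`‖R(x) − G(x − x*)‖ ≤ K‖x − x*‖^{1+λ}` on a neighborhood of `x*`. -/
theorem stmt11 (d : ℕ) (hd : 1 ≤ d)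
    (f : EuclideanSpace ℝ (Fin d) → ℝ)
    (ψ : EuclideanSpace ℝ (Fin d) → EuclideanSpace ℝ (Fin d))
    (xstar : EuclideanSpace ℝ (Fin d))
    (hf : ContDiff ℝ 2 f)
    (hmin : IsMinOn f Set.univ xstar)
    (hgrad0 : gradient f xstar = 0)
    (Hf : EuclideanSpace ℝ (Fin d) →L[ℝ] EuclideanSpace ℝ (Fin d))
    (hHfpos : ∀ v : EuclideanSpace ℝ (Fin d), v ≠ 0 → 0 < ⟪Hf v, v⟫)
    (Dψ : EuclideanSpace ℝ (Fin d) →L[ℝ] EuclideanSpace ℝ (Fin d))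
    (hDψ : HasFDerivAt ψ Dψ 0)
    (hψ0 : ψ 0 = 0)
    (K₂ lam ε L K₃ ε' : ℝ) (hK₂ : 0 < K₂) (hlam0 : 0 < lam) (hlam1 : lam ≤ 1)
    (hε : 0 < ε) (hε' : 0 < ε') (hL : 0 < L)
    (hψ : ∀ x : EuclideanSpace ℝ (Fin d), ‖x‖ < ε →
      ‖Dψ x - ψ x‖ ≤ K₂ * ‖x‖ ^ (1 + lam))
    (hLip : ∀ u v : EuclideanSpace ℝ (Fin d),
      ‖gradient f u - gradient f v‖ ≤ L * ‖u - v‖)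
    (hHess : ∀ x : EuclideanSpace ℝ (Fin d), ‖x - xstar‖ < ε' →
      ‖gradient f x - Hf (x - xstar)‖ ≤ K₃ * ‖x - xstar‖ ^ 2) :
    ∃ K > (0 : ℝ), ∃ δ > (0 : ℝ), ∀ x : EuclideanSpace ℝ (Fin d),
      ‖x - xstar‖ < δ →
      ‖ψ (gradient f x) - Dψ (Hf (x - xstar))‖ ≤ K * ‖x - xstar‖ ^ (1 + lam) := by
  refine ⟨K₂ * L ^ (1 + lam) + ‖Dψ‖ * |K₃| + 1, ?_, min 1 (min ε' (ε / L)), ?_, ?_⟩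
  · have h1 : 0 < K₂ * L ^ (1 + lam) :=
      mul_pos hK₂ (Real.rpow_pos_of_pos hL _)
    have h2 : 0 ≤ ‖Dψ‖ * |K₃| := mul_nonneg (norm_nonneg _) (abs_nonneg _)
    linarith
  · positivity
  · intro x hx
    set r := ‖x - xstar‖ with hr
    have hr0 : 0 ≤ r := norm_nonneg _
    have hr1 : r ≤ 1 := le_of_lt (lt_of_lt_of_le hx (min_le_left _ _))
    have hrε' : r < ε' := lt_of_lt_of_le hx (le_trans (min_le_right _ _) (min_le_left _ _))
    have hrεL : r < ε / L := lt_of_lt_of_le hx (le_trans (min_le_right _ _) (min_le_right _ _))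
    set g := gradient f x with hg
    have hgnorm : ‖g‖ ≤ L * r := by
      have := hLip x xstar
      rwa [hgrad0, sub_zero] at this
    have hgε : ‖g‖ < ε := by
      have : L * r < ε := by
        rw [mul_comm]
        exact (lt_div_iff₀ hL).mp hrεL
      linarith
    have h1 : ‖Dψ g - ψ g‖ ≤ K₂ * L ^ (1 + lam) * r ^ (1 + lam) := by
      have := hψ g hgε
      calc ‖Dψ g - ψ g‖ ≤ K₂ * ‖g‖ ^ (1 + lam) := this
        _ ≤ K₂ * (L * r) ^ (1 + lam) := by
            exact mul_le_mul_of_nonneg_left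
              (Real.rpow_le_rpow (norm_nonneg _) hgnorm (by linarith)) hK₂.le
        _ = K₂ * L ^ (1 + lam) * r ^ (1 + lam) := by
            rw [Real.mul_rpow hL.le hr0, mul_assoc]
    have h2 : ‖Dψ (g - Hf (x - xstar))‖ ≤ ‖Dψ‖ * |K₃| * r ^ (1 + lam) := by
      have hH := hHess x hrε'
      have hsq : r ^ 2 ≤ r ^ (1 + lam) := by
        rcases eq_or_lt_of_le hr0 with h0 | h0
        · rw [← h0]
          simp [Real.zero_rpow (by linarith : (1:ℝ) + lam ≠ 0)]
        · calc r ^ 2 = r ^ (2 : ℝ) := by rw [Real.rpow_two]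
            _ ≤ r ^ (1 + lam) := Real.rpow_le_rpow_of_exponent_ge h0 hr1 (by linarith)
      calc ‖Dψ (g - Hf (x - xstar))‖ ≤ ‖Dψ‖ * ‖g - Hf (x - xstar)‖ := Dψ.le_opNorm _
        _ ≤ ‖Dψ‖ * (K₃ * r ^ 2) := by gcongr
        _ ≤ ‖Dψ‖ * (|K₃| * r ^ (1 + lam)) := by
            have : K₃ * r ^ 2 ≤ |K₃| * r ^ (1 + lam) :=
              le_trans (mul_le_mul_of_nonneg_right (le_abs_self K₃) (by positivity))
                (mul_le_mul_of_nonneg_left hsq (abs_nonneg _))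
            exact mul_le_mul_of_nonneg_left this (norm_nonneg _)
        _ = ‖Dψ‖ * |K₃| * r ^ (1 + lam) := by ring
    calc ‖ψ g - Dψ (Hf (x - xstar))‖
        = ‖(ψ g - Dψ g) + Dψ (g - Hf (x - xstar))‖ := by
          rw [ContinuousLinearMap.map_sub Dψ g (Hf (x - xstar))]
          abel
      _ ≤ ‖ψ g - Dψ g‖ + ‖Dψ (g - Hf (x - xstar))‖ := norm_add_le _ _
      _ = ‖Dψ g - ψ g‖ + ‖Dψ (g - Hf (x - xstar))‖ := by rw [norm_sub_rev]
      _ ≤ K₂ * L ^ (1 + lam) * r ^ (1 + lam) + ‖Dψ‖ * |K₃| * r ^ (1 + lam) :=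
          add_le_add h1 h2
      _ ≤ (K₂ * L ^ (1 + lam) + ‖Dψ‖ * |K₃| + 1) * r ^ (1 + lam) := by
          have : (0:ℝ) ≤ r ^ (1 + lam) := Real.rpow_nonneg hr0 _
          nlinarith
end
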